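/- arXiv:2404.11450 — 2 statements merged into one kernel-verified Lean document; each statement's English description precedes it below -/
import Mathlib

section
/- The Optimized Unary Encoding (OUE) perturbation mechanism satisfies ε-local differential privacy: for any two one-hot input vectors V1, V2 of length d and any output vector y in {0,1}^d, Pr[Ψ(V1)=y] ≤ e^ε · Pr[Ψ(V2)=y]. -/
open Finset

/-- Probability that the OUE mechanism, applied to input vector `V`, outputs `y`:
each bit is perturbed independently; a true bit outputs 1 with probability 1/2,
a false bit outputs 1 with probability 1/(e^ε+1). -/
noncomputable def oueProb {d : ℕ} (ε : ℝ) (V y : Fin d → Bool) : ℝ :=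
  ∏ i, (if V i then (1 : ℝ) / 2
        else if y i then 1 / (Real.exp ε + 1) else Real.exp ε / (Real.exp ε + 1))

/-!
Let `g` be the law of a perturbed zero bit and `Q = ∏ᵢ g(yᵢ)` the probability of `y` for the
all-zeros input. The input one-hot at `a` yields `y` with probability `Q / (2 g(y_a))`. So the
privacy ratio is `g(y_b) / g(y_a)`, and the two values of `g` are
`1/(e^ε+1)` and `e^ε/(e^ε+1)`, whose ratio is at most `e^ε` when `ε ≥ 0`.
-/

noncomputable def oueFactor (ε : ℝ) (v b : Bool) : ℝ :=
  if v then 1 / 2 else if b then 1 / (Real.exp ε + 1) else Real.exp ε / (Real.exp ε + 1)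

lemma oueProb_eq_prod_oueFactor {d : ℕ} (ε : ℝ) (V y : Fin d → Bool) :
    oueProb ε V y = ∏ i, oueFactor ε (V i) (y i) :=
  rfl

lemma oueFactor_true (ε : ℝ) (b : Bool) : oueFactor ε true b = 1 / 2 :=
  rfl

lemma oueFactor_false_pos (ε : ℝ) (b : Bool) : 0 < oueFactor ε false b := by
  cases b <;> simp only [oueFactor] <;> positivity

lemma oueFactor_false_le_exp_mul {ε : ℝ} (hε : 0 ≤ ε) (b b' : Bool) :
    oueFactor ε false b ≤ Real.exp ε * oueFactor ε false b' := by
  have hexp : 1 ≤ Real.exp ε := Real.one_le_exp hε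
  have hden : 0 < Real.exp ε + 1 := by positivity
  cases b <;> cases b' <;> simp only [oueFactor, Bool.false_eq_true, if_false, if_true] <;>
    rw [← mul_div_assoc, div_le_div_iff_of_pos_right hden] <;> nlinarith

lemma oueProb_oneHot {d : ℕ} (ε : ℝ) (a : Fin d) (y : Fin d → Bool) :
    oueProb ε (fun j => decide (j = a)) y =
      (∏ i, oueFactor ε false (y i)) / 2 / oueFactor ε false (y a) := by
  have hrest : ∏ i ∈ univ.erase a, oueFactor ε (decide (i = a)) (y i) =
      ∏ i ∈ univ.erase a, oueFactor ε false (y i) :=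
    prod_congr rfl fun i hi => by rw [decide_eq_false (ne_of_mem_erase hi)]
  rw [oueProb_eq_prod_oueFactor, ← mul_prod_erase univ _ (mem_univ a),
    ← mul_prod_erase univ _ (mem_univ a), hrest, decide_eq_true rfl, oueFactor_true]
  field_simp [(oueFactor_false_pos ε (y a)).ne']

/-- The OUE perturbation mechanism satisfies ε-LDP: for any one-hot inputs V1, V2
and any output y, Pr[Ψ(V1)=y] ≤ e^ε · Pr[Ψ(V2)=y]. -/
theorem oue_satisfies_LDP {d : ℕ} (ε : ℝ) (hε : 0 ≤ ε)
    (V1 V2 y : Fin d → Bool)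
    (h1 : ∃ a : Fin d, V1 = fun j => decide (j = a))
    (h2 : ∃ a : Fin d, V2 = fun j => decide (j = a)) :
    oueProb ε V1 y ≤ Real.exp ε * oueProb ε V2 y := by
  obtain ⟨a, rfl⟩ := h1
  obtain ⟨b, rfl⟩ := h2
  have hQ : 0 ≤ (∏ i, oueFactor ε false (y i)) / 2 :=
    div_nonneg (prod_nonneg fun i _ => (oueFactor_false_pos ε (y i)).le) zero_le_two
  rw [oueProb_oneHot, oueProb_oneHot, mul_div_assoc',
    div_le_div_iff₀ (oueFactor_false_pos ε _) (oueFactor_false_pos ε _)]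
  have hratio := mul_le_mul_of_nonneg_left (oueFactor_false_le_exp_mul hε (y b) (y a)) hQ
  linarith
end

section
/- The variance of the OUE frequency estimator when the true frequency of x is 0 equals 4e^ε / (n(e^ε − 1)^2): with n independent users none of whom hold value x, each reporting bit x as 1 with probability q = 1/(e^ε+1), the estimator f̂(x) = (C/n − q)/(1/2 − q), where C is the number of users reporting 1 at bit x, has variance q(1−q)/(n(1/2 − q)^2) = 4e^ε/(n(e^ε−1)^2). -/
/-!
The estimator is affine in the count `C`: `f̂ = C / (n (1/2 - q)) - q / (1/2 - q)`. An affine map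
`C ↦ a C + b` multiplies the variance by `a²`, and `C` is binomial with variance `n q (1 - q)`
(the variance identity for Bernstein polynomials, evaluated at `q`). Hence
`Var f̂ = q (1 - q) / (n (1/2 - q)²)`, and `q (1 - q) = e^ε / (e^ε + 1)²`,
`1/2 - q = (e^ε - 1) / (2 (e^ε + 1))` give the closed form.
-/

open Finset Polynomial

section WeightedVariance

variable {ι R : Type*} [CommRing R]

def weightedVariance (s : Finset ι) (w f : ι → R) : R :=
  ∑ i ∈ s, w i * (f i - ∑ j ∈ s, w j * f j) ^ 2

theorem weightedVariance_affine {s : Finset ι} {w : ι → R} (hw : ∑ i ∈ s, w i = 1)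
    (f : ι → R) (a b : R) :
    weightedVariance s w (fun i => a * f i + b) = a ^ 2 * weightedVariance s w f := by
  have hmean : ∑ j ∈ s, w j * (a * f j + b) = a * ∑ j ∈ s, w j * f j + b := by
    calc ∑ j ∈ s, w j * (a * f j + b) = a * ∑ j ∈ s, w j * f j + (∑ j ∈ s, w j) * b := by
          rw [mul_sum, sum_mul, ← sum_add_distrib]
          exact sum_congr rfl fun j _ => by ring
      _ = a * ∑ j ∈ s, w j * f j + b := by rw [hw, one_mul]
  rw [weightedVariance, weightedVariance, hmean, mul_sum s _ (a ^ 2)]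
  exact sum_congr rfl fun i _ => by ring

end WeightedVariance

section Binomial

variable {R : Type*} [CommRing R]

def binomialWeight (n : ℕ) (x : R) (k : ℕ) : R := n.choose k * x ^ k * (1 - x) ^ (n - k)

theorem eval_bernsteinPolynomial (n k : ℕ) (x : R) :
    (bernsteinPolynomial R n k).eval x = binomialWeight n x k := by
  simp [bernsteinPolynomial, binomialWeight]

theorem sum_binomialWeight (n : ℕ) (x : R) :
    ∑ k ∈ range (n + 1), binomialWeight n x k = 1 := by
  simpa [eval_finsetSum, eval_bernsteinPolynomial] using
    congr_arg (eval x) (bernsteinPolynomial.sum R n)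

theorem sum_binomialWeight_mul (n : ℕ) (x : R) :
    ∑ k ∈ range (n + 1), binomialWeight n x k * k = n * x := by
  simpa [eval_finsetSum, eval_bernsteinPolynomial, mul_comm] using
    congr_arg (eval x) (bernsteinPolynomial.sum_smul R n)

theorem weightedVariance_binomialWeight (n : ℕ) (x : R) :
    weightedVariance (range (n + 1)) (binomialWeight n x) (fun k => (k : R)) =
      n * x * (1 - x) := by
  have h := congr_arg (eval x) (bernsteinPolynomial.variance R n)
  simp only [nsmul_eq_mul, eval_finsetSum, eval_mul, eval_pow, eval_sub, eval_natCast, eval_X,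
    eval_bernsteinPolynomial, eval_one] at h
  rw [weightedVariance, sum_binomialWeight_mul, ← h]
  exact sum_congr rfl fun k _ => by ring

end Binomial

theorem oue_variance_general (ε : ℝ) (n : ℕ) :
    let q : ℝ := 1 / (Real.exp ε + 1)
    let P : ℕ → ℝ := fun k => (n.choose k : ℝ) * q ^ k * (1 - q) ^ (n - k)
    let est : ℕ → ℝ := fun k => ((k : ℝ) / n - q) / (1/2 - q)
    let mean : ℝ := ∑ k ∈ Finset.range (n + 1), P k * est k
    ∑ k ∈ Finset.range (n + 1), P k * (est k - mean) ^ 2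
      = 4 * Real.exp ε / (n * (Real.exp ε - 1) ^ 2) := by
  intro q P est mean
  have hest : est = fun k : ℕ => (n : ℝ)⁻¹ / (1 / 2 - q) * (k : ℝ) + -(q / (1 / 2 - q)) := by
    funext k
    simp only [est]
    ring
  change weightedVariance (range (n + 1)) (binomialWeight n q) est = _
  rw [hest, weightedVariance_affine (sum_binomialWeight n q), weightedVariance_binomialWeight]
  simp only [q]
  field_simp
  ring

/-- Variance of the OUE frequency estimator when the true frequency of x is 0:
with C ~ Binomial(n, q), q = 1/(e^ε+1), the estimator f̂ = (C/n − q)/(1/2 − q)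
has variance 4e^ε/(n(e^ε−1)²). -/
theorem oue_variance (ε : ℝ) (hε : 0 < ε) (n : ℕ) (hn : 1 ≤ n) :
    let q : ℝ := 1 / (Real.exp ε + 1)
    let P : ℕ → ℝ := fun k => (n.choose k : ℝ) * q ^ k * (1 - q) ^ (n - k)
    let est : ℕ → ℝ := fun k => ((k : ℝ) / n - q) / (1/2 - q)
    let mean : ℝ := ∑ k ∈ Finset.range (n + 1), P k * est k
    ∑ k ∈ Finset.range (n + 1), P k * (est k - mean) ^ 2
      = 4 * Real.exp ε / (n * (Real.exp ε - 1) ^ 2) :=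
  oue_variance_general ε n
end
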